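/- arXiv:2505.00656 — 2 statements merged into one kernel-verified Lean document; each statement's English description precedes it below -/
import Mathlib

section
/- Let $h \in (0,1]$, $x \in \mathbb{R}$, $V$ a Brownian motion on $[0,h]$, and $X^{*,x}$ the solution of $dX^{*,x}_t = \mu^*(X^{*,x}_t)\,dt + dV_t$, $X^{*,x}_0 = x$, where $\mu^*$ is bounded by $M$. Then for $p = 5$ there is a constant $c$ depending only on $M$ such that $\mathbb{E}\big[ \big| \int_0^h \mathbf{1}_{[\xi, \infty)}(X^{*,x}_s) - \mathbf{1}_{[\xi, \infty)}(x + V_s)\,ds \big|^2 \big] \leq c \, h^{9/4}$. -/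
open MeasureTheory ProbabilityTheory Filter Real
open scoped ENNReal NNReal

/-- A standard Brownian motion on `[0, T]`. -/
def IsBrownianMotionOn {Ω : Type*} [MeasurableSpace Ω] (μ : Measure Ω)
    (T : ℝ) (W : ℝ → Ω → ℝ) : Prop :=
  (∀ u, Measurable (W u)) ∧
  (∀ᵐ ω ∂μ, W 0 ω = 0) ∧
  (∀ᵐ ω ∂μ, ContinuousOn (fun u => W u ω) (Set.Icc 0 T)) ∧
  (∀ s t : ℝ, 0 ≤ s → s ≤ t → t ≤ T →
    Measure.map (fun ω => W t ω - W s ω) μ = gaussianReal 0 (t - s).toNNReal) ∧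
  (∀ u : ℕ → ℝ, Monotone u → 0 ≤ u 0 → (∀ i, u i ≤ T) →
    iIndepFun (fun i ω => W (u (i + 1)) ω - W (u i) ω) μ)


lemma aux_V_aemeas {Ω : Type*} [MeasurableSpace Ω] (μ : Measure Ω) [IsProbabilityMeasure μ]
    (V : ℝ → Ω → ℝ) (hmeas : ∀ u, Measurable (V u))
    (hcont : ∀ᵐ ω ∂μ, ContinuousOn (fun u => V u ω) (Set.Icc 0 1))
    {h : ℝ} (h1 : h ≤ 1) :
    AEMeasurable (fun p : Ω × ℝ => V p.2 p.1)
      (μ.prod (volume.restrict (Set.Ioc 0 h))) := by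
  set ν := volume.restrict (Set.Ioc (0:ℝ) h) with hν
  set W : ℕ → Ω × ℝ → ℝ :=
    fun n p => V (min 1 ((⌈p.2 * ((n : ℝ) + 1)⌉ : ℝ) / ((n : ℝ) + 1))) p.1 with hW
  have hWmeas : ∀ n, Measurable (W n) := by
    intro n
    have hg : Measurable (fun q : Ω × ℤ => V (min 1 ((q.2 : ℝ) / ((n : ℝ) + 1))) q.1) := by
      apply measurable_from_prod_countable_left
      intro k
      exact hmeas (min 1 ((k : ℝ) / ((n : ℝ) + 1)))
    have hφ : Measurable (fun p : Ω × ℝ => (p.1, ⌈p.2 * ((n : ℝ) + 1)⌉)) :=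
      measurable_fst.prodMk (Int.measurable_ceil.comp (measurable_snd.mul_const _))
    exact hg.comp hφ
  apply aemeasurable_of_tendsto_metrizable_ae' (f := W) (fun n => (hWmeas n).aemeasurable)
  have h2 : ∀ᵐ p : Ω × ℝ ∂(μ.prod ν), p.2 ∈ Set.Ioc (0:ℝ) h := by
    rw [ae_iff]
    have hset : {p : Ω × ℝ | ¬ p.2 ∈ Set.Ioc (0:ℝ) h} = Set.univ ×ˢ (Set.Ioc (0:ℝ) h)ᶜ := by
      ext p; simp [Set.mem_prod]
    rw [hset, Measure.prod_prod]
    have : ν (Set.Ioc (0:ℝ) h)ᶜ = 0 := by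
      rw [hν, Measure.restrict_apply measurableSet_Ioc.compl]
      simp
    simp [this]
  have h3 : ∀ᵐ p : Ω × ℝ ∂(μ.prod ν), ContinuousOn (fun u => V u p.1) (Set.Icc 0 1) := by
    obtain ⟨A, hsub, hAm, hA0⟩ := exists_measurable_superset_of_null (ae_iff.mp hcont)
    rw [ae_iff]
    refine measure_mono_null (t := A ×ˢ (Set.univ : Set ℝ)) ?_ ?_
    · intro p hp; exact ⟨hsub hp, trivial⟩
    · rw [Measure.prod_prod, hA0, zero_mul]
  filter_upwards [h2, h3] with p hp2 hp3
  set s := p.2 with hs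
  have hs0 : 0 < s := hp2.1
  have hs1 : s ≤ 1 := hp2.2.trans h1
  have hr : ∀ n : ℕ, s ≤ (⌈s * ((n : ℝ) + 1)⌉ : ℝ) / ((n : ℝ) + 1) := by
    intro n
    rw [le_div_iff₀ (by positivity)]
    exact Int.le_ceil _
  have hmem : ∀ n : ℕ, min 1 ((⌈s * ((n : ℝ) + 1)⌉ : ℝ) / ((n : ℝ) + 1)) ∈ Set.Icc (0:ℝ) 1 :=
    fun n => ⟨le_min zero_le_one (hs0.le.trans (hr n)), min_le_left _ _⟩
  have htend : Tendsto (fun n : ℕ => min 1 ((⌈s * ((n : ℝ) + 1)⌉ : ℝ) / ((n : ℝ) + 1)))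
      atTop (nhds s) := by
    apply tendsto_of_tendsto_of_tendsto_of_le_of_le (g := fun _ : ℕ => s)
      (h := fun n : ℕ => s + 1 / ((n : ℝ) + 1)) tendsto_const_nhds
    · have := tendsto_one_div_add_atTop_nhds_zero_nat (𝕜 := ℝ)
      have h' := tendsto_const_nhds (x := s) (f := atTop (α := ℕ)) |>.add this
      simpa using h'
    · exact fun n => le_min hs1 (hr n)
    · intro n
      refine (min_le_right _ _).trans ?_
      rw [div_le_iff₀ (by positivity)]
      have := (Int.ceil_lt_add_one (s * ((n:ℝ)+1))).le
      calc (⌈s * ((n : ℝ) + 1)⌉ : ℝ) ≤ s * ((n:ℝ)+1) + 1 := this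
        _ = (s + 1 / ((n:ℝ)+1)) * ((n:ℝ)+1) := by field_simp
  have hc := (hp3 s ⟨hs0.le, hs1⟩).tendsto
  exact hc.comp (tendsto_nhdsWithin_of_tendsto_nhds_of_eventually_within _ htend
    (Eventually.of_forall hmem))

lemma gauss_aux {v : NNReal} (hv : v ≠ 0) (a b : ℝ) :
    gaussianReal 0 v (Set.Icc a b)
      ≤ ENNReal.ofReal ((Real.sqrt (2 * Real.pi * v))⁻¹ * (b - a)) := by
  rw [gaussianReal_of_var_ne_zero _ hv, withDensity_apply _ measurableSet_Icc]
  calc ∫⁻ y in Set.Icc a b, gaussianPDF 0 v y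
      ≤ ∫⁻ _ in Set.Icc a b, ENNReal.ofReal ((Real.sqrt (2 * Real.pi * v))⁻¹) := by
        apply lintegral_mono
        intro y
        apply ENNReal.ofReal_le_ofReal
        rw [gaussianPDFReal]
        refine mul_le_of_le_one_right (by positivity) ?_
        rw [Real.exp_le_one_iff]
        have : (0:ℝ) ≤ (y - 0)^2 := sq_nonneg _
        have hv2 : (0:ℝ) ≤ 2 * (v:ℝ) := by positivity
        exact div_nonpos_of_nonpos_of_nonneg (by linarith) hv2
    _ = ENNReal.ofReal ((Real.sqrt (2 * Real.pi * v))⁻¹) * volume (Set.Icc a b) :=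
        setLIntegral_const _ _
    _ ≤ ENNReal.ofReal ((Real.sqrt (2 * Real.pi * v))⁻¹ * (b - a)) := by
        rw [Real.volume_Icc, ← ENNReal.ofReal_mul (by positivity)]

lemma ind_aux (ξ x r a y : ℝ) (hr : |a - (x + y)| ≤ r) :
    ENNReal.ofReal |Set.indicator (Set.Ici ξ) (fun _ => (1:ℝ)) a
      - Set.indicator (Set.Ici ξ) (fun _ => (1:ℝ)) (x + y)|
      ≤ Set.indicator (Set.Icc (ξ - x - r) (ξ - x + r)) (fun _ => (1:ℝ≥0∞)) y := by
  have hr0 : 0 ≤ r := (abs_nonneg _).trans hr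
  have habs := abs_le.mp hr
  by_cases ha : a ∈ Set.Ici ξ <;> by_cases hb : x + y ∈ Set.Ici ξ
  · simp [Set.indicator_of_mem, ha, hb]
  · have hy : y ∈ Set.Icc (ξ - x - r) (ξ - x + r) := by
      constructor
      · have : ξ ≤ a := ha
        have := habs.2
        linarith
      · have : x + y < ξ := lt_of_not_ge hb
        linarith
    rw [Set.indicator_of_mem ha, Set.indicator_of_notMem hb, Set.indicator_of_mem hy]
    simp
  · have hy : y ∈ Set.Icc (ξ - x - r) (ξ - x + r) := by
      constructor
      · have : ξ ≤ x + y := hb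
        have : a < ξ := lt_of_not_ge ha
        have := habs.1
        linarith
      · have : ξ ≤ x + y := hb
        have : a < ξ := lt_of_not_ge ha
        linarith
    rw [Set.indicator_of_notMem ha, Set.indicator_of_mem hb, Set.indicator_of_mem hy]
    simp
  · simp [Set.indicator_of_notMem, ha, hb]

theorem stmt_15 {Ω : Type*} [MeasurableSpace Ω] (μ : Measure Ω) [IsProbabilityMeasure μ]
    (M : ℝ) (hM : 0 ≤ M) (ξ : ℝ) :
    ∃ c > 0, ∀ h ∈ Set.Ioc (0 : ℝ) 1, ∀ (x : ℝ) (V X : ℝ → Ω → ℝ) (μstar : ℝ → ℝ),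
      Measurable μstar → (∀ y, |μstar y| ≤ M) →
      IsBrownianMotionOn μ 1 V →
      Measurable (Function.uncurry fun s ω => X s ω) →
      (∀ t ∈ Set.Icc (0 : ℝ) h, ∀ᵐ ω ∂μ,
        X t ω = x + (∫ s in (0 : ℝ)..t, μstar (X s ω)) + V t ω) →
      ∫ ω, |∫ s in (0 : ℝ)..h,
          (Set.indicator (Set.Ici ξ) (fun _ => (1 : ℝ)) (X s ω)
            - Set.indicator (Set.Ici ξ) (fun _ => (1 : ℝ)) (x + V s ω))| ^ 2 ∂μ
        ≤ c * h ^ ((9 : ℝ) / 4) := by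
  classical
  have hK0 : (0:ℝ) ≤ (Real.sqrt (2 * Real.pi))⁻¹ * 4 * M := by positivity
  refine ⟨(Real.sqrt (2 * Real.pi))⁻¹ * 4 * M + 1, by linarith, ?_⟩
  intro h hh x V X μstar hμmeas hμbd hBM hXmeas hSDE
  obtain ⟨h0, h1⟩ := hh
  set f : ℝ → ℝ := Set.indicator (Set.Ici ξ) (fun _ => (1:ℝ)) with hf
  have hfmeas : Measurable f := measurable_const.indicator measurableSet_Ici
  have hfbd : ∀ y, 0 ≤ f y ∧ f y ≤ 1 := by
    intro y
    by_cases hy : y ∈ Set.Ici ξ <;>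
      simp [hf, Set.indicator_of_mem, Set.indicator_of_notMem, hy]
  set g : Ω → ℝ := fun ω => |∫ s in (0:ℝ)..h, (f (X s ω) - f (x + V s ω))| ^ 2 with hg
  by_cases hInt : Integrable g μ
  swap
  · rw [integral_undef hInt]
    have h94 : (0:ℝ) ≤ h ^ ((9:ℝ)/4) := Real.rpow_nonneg h0.le _
    nlinarith
  set ν := volume.restrict (Set.Ioc (0:ℝ) h) with hν
  set F : Ω → ℝ → ℝ≥0∞ := fun ω s => ENNReal.ofReal |f (X s ω) - f (x + V s ω)| with hF
  have hVae : AEMeasurable (fun p : Ω × ℝ => V p.2 p.1) (μ.prod ν) :=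
    aux_V_aemeas μ V hBM.1 hBM.2.2.1 h1
  have hFae : AEMeasurable (Function.uncurry F) (μ.prod ν) := by
    have A1 : AEMeasurable (fun p : Ω × ℝ => f (X p.2 p.1)) (μ.prod ν) :=
      (hfmeas.comp (hXmeas.comp measurable_swap)).aemeasurable
    have A2 : AEMeasurable (fun p : Ω × ℝ => f (x + V p.2 p.1)) (μ.prod ν) :=
      hfmeas.comp_aemeasurable (hVae.const_add x)
    exact ENNReal.measurable_ofReal.comp_aemeasurable (measurable_abs.comp_aemeasurable (A1.sub A2))
  have step1 : ∀ᵐ ω ∂μ, ENNReal.ofReal (g ω) ≤ ENNReal.ofReal h * ∫⁻ s, F ω s ∂ν := by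
    filter_upwards [hBM.2.2.1] with ω hω
    set φ : ℝ → ℝ := fun s => f (X s ω) - f (x + V s ω) with hφ
    have hm1 : Measurable (fun s => f (X s ω)) :=
      hfmeas.comp (hXmeas.comp (measurable_id.prodMk measurable_const))
    have hm2 : AEMeasurable (fun s => x + V s ω) ν := by
      have hss : Set.Ioc (0:ℝ) h ⊆ Set.Icc (0:ℝ) 1 := fun s hs => ⟨hs.1.le, hs.2.trans h1⟩
      have hsub : ν ≤ volume.restrict (Set.Icc (0:ℝ) 1) := Measure.restrict_mono hss le_rfl
      exact ((hω.aemeasurable measurableSet_Icc).mono_measure hsub).const_add x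
    have hφae : AEStronglyMeasurable φ ν :=
      (hm1.aemeasurable.sub (hfmeas.comp_aemeasurable hm2)).aestronglyMeasurable
    have hφbd : ∀ s, |φ s| ≤ 1 := by
      intro s
      have ha := hfbd (X s ω)
      have hb := hfbd (x + V s ω)
      rw [hφ]
      rw [abs_le]
      constructor
      · simp only; linarith [ha.1, hb.2]
      · simp only; linarith [ha.2, hb.1]
    have hφint : IntegrableOn φ (Set.Ioc 0 h) volume :=
      ⟨hφae, HasFiniteIntegral.of_bounded (C := 1)
        (Eventually.of_forall (fun s => by rw [Real.norm_eq_abs]; exact hφbd s))⟩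
    have hA : |∫ s in (0:ℝ)..h, φ s| ≤ ∫ s in Set.Ioc (0:ℝ) h, |φ s| := by
      rw [intervalIntegral.integral_of_le h0.le]
      simpa [Real.norm_eq_abs] using
        norm_integral_le_integral_norm (μ := volume.restrict (Set.Ioc (0:ℝ) h)) (f := φ)
    set A := ∫ s in Set.Ioc (0:ℝ) h, |φ s| with hAdef
    have hA0 : 0 ≤ A := integral_nonneg (fun s => abs_nonneg _)
    have hAh : A ≤ h := by
      have hle : A ≤ ∫ _ in Set.Ioc (0:ℝ) h, (1:ℝ) :=
        integral_mono hφint.abs (integrable_const 1) (fun s => hφbd s)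
      rw [setIntegral_const, measureReal_def, Real.volume_Ioc, smul_eq_mul, mul_one, sub_zero,
        ENNReal.toReal_ofReal h0.le] at hle
      exact hle
    have hgA : g ω ≤ h * A := by
      have h2 : |∫ s in (0:ℝ)..h, φ s| ^ 2 ≤ A ^ 2 := pow_le_pow_left₀ (abs_nonneg _) hA 2
      have : g ω = |∫ s in (0:ℝ)..h, φ s| ^ 2 := rfl
      rw [this]
      nlinarith
    calc ENNReal.ofReal (g ω) ≤ ENNReal.ofReal (h * A) := ENNReal.ofReal_le_ofReal hgA
      _ = ENNReal.ofReal h * ENNReal.ofReal A := ENNReal.ofReal_mul h0.le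
      _ = ENNReal.ofReal h * ∫⁻ s, F ω s ∂ν := by
          rw [ofReal_integral_eq_lintegral_ofReal hφint.abs
            (Eventually.of_forall (fun s => abs_nonneg _))]
  have hC0 : (0:ℝ) ≤ (Real.sqrt (2 * Real.pi))⁻¹ * (2 * M * h) := by positivity
  have perS : ∀ s ∈ Set.Ioc (0:ℝ) h, ∫⁻ ω, F ω s ∂μ
      ≤ ENNReal.ofReal ((Real.sqrt (2 * Real.pi))⁻¹ * (2 * M * h) * s ^ (-(1/2) : ℝ)) := by
    intro s hs
    set S := Set.Icc (ξ - x - M * h) (ξ - x + M * h) with hS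
    have hbd : ∀ᵐ ω ∂μ, F ω s ≤ Set.indicator ((V s) ⁻¹' S) (fun _ => (1:ℝ≥0∞)) ω := by
      filter_upwards [hSDE s ⟨hs.1.le, hs.2⟩] with ω hωs
      have hi : |X s ω - (x + V s ω)| ≤ M * h := by
        rw [hωs]
        have heq : x + (∫ u in (0:ℝ)..s, μstar (X u ω)) + V s ω - (x + V s ω)
            = ∫ u in (0:ℝ)..s, μstar (X u ω) := by ring
        rw [heq]
        have hn : ‖∫ u in (0:ℝ)..s, μstar (X u ω)‖ ≤ M * |s - 0| :=
          intervalIntegral.norm_integral_le_of_norm_le_const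
            (fun u _ => by rw [Real.norm_eq_abs]; exact hμbd _)
        rw [Real.norm_eq_abs] at hn
        calc |∫ u in (0:ℝ)..s, μstar (X u ω)| ≤ M * |s - 0| := hn
          _ = M * s := by rw [sub_zero, abs_of_pos hs.1]
          _ ≤ M * h := mul_le_mul_of_nonneg_left hs.2 hM
      have hind := ind_aux ξ x (M*h) (X s ω) (V s ω) hi
      have hrw : Set.indicator (Set.Icc (ξ - x - M*h) (ξ - x + M*h)) (fun _ => (1:ℝ≥0∞)) (V s ω)
          = Set.indicator ((V s) ⁻¹' S) (fun _ => (1:ℝ≥0∞)) ω := by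
        by_cases hmem : V s ω ∈ S <;>
          simp [Set.indicator_apply, hmem, hS, Set.mem_preimage]
      rw [hrw] at hind
      exact hind
    have hvne : s.toNNReal ≠ 0 := (Real.toNNReal_pos.mpr hs.1).ne'
    have hcoe : (s.toNNReal : ℝ) = s := Real.coe_toNNReal _ hs.1.le
    calc ∫⁻ ω, F ω s ∂μ
        ≤ ∫⁻ ω, Set.indicator ((V s) ⁻¹' S) (fun _ => (1:ℝ≥0∞)) ω ∂μ := lintegral_mono_ae hbd
      _ = μ ((V s) ⁻¹' S) := by
          rw [lintegral_indicator ((hBM.1 s) measurableSet_Icc)]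
          exact setLIntegral_one _
      _ = gaussianReal 0 s.toNNReal S := by
          have hmap := hBM.2.2.2.1 0 s le_rfl hs.1.le (hs.2.trans h1)
          have hcongr : (fun ω => V s ω - V 0 ω) =ᵐ[μ] V s := by
            filter_upwards [hBM.2.1] with ω h0ω
            rw [h0ω, sub_zero]
          rw [← Measure.map_apply (hBM.1 s) measurableSet_Icc, ← Measure.map_congr hcongr,
            hmap, sub_zero]
      _ ≤ ENNReal.ofReal ((Real.sqrt (2 * Real.pi * s.toNNReal))⁻¹
            * ((ξ - x + M*h) - (ξ - x - M*h))) := gauss_aux hvne _ _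
      _ = ENNReal.ofReal ((Real.sqrt (2 * Real.pi))⁻¹ * (2 * M * h) * s ^ (-(1/2) : ℝ)) := by
          congr 1
          rw [hcoe]
          have hsq : Real.sqrt (2 * Real.pi * s) = Real.sqrt (2 * Real.pi) * Real.sqrt s :=
            Real.sqrt_mul (by positivity) s
          have hss : Real.sqrt s = s ^ ((1:ℝ)/2) := Real.sqrt_eq_rpow s
          have hneg : s ^ (-(1/2) : ℝ) = (s ^ ((1/2) : ℝ))⁻¹ := Real.rpow_neg hs.1.le (1/2)
          rw [hsq, hss, mul_inv, hneg]
          ring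
  have hK : ∫⁻ s in Set.Ioc (0:ℝ) h, ENNReal.ofReal (s ^ (-(1/2):ℝ)) ∂volume
      = ENNReal.ofReal (2 * h ^ ((1:ℝ)/2)) := by
    have hii : IntervalIntegrable (fun s : ℝ => s ^ (-(1/2):ℝ)) volume 0 h :=
      intervalIntegral.intervalIntegrable_rpow' (by norm_num)
    have hint : IntegrableOn (fun s : ℝ => s ^ (-(1/2):ℝ)) (Set.Ioc 0 h) volume :=
      (intervalIntegrable_iff_integrableOn_Ioc_of_le h0.le).mp hii
    have hnn : 0 ≤ᵐ[volume.restrict (Set.Ioc (0:ℝ) h)] fun s : ℝ => s ^ (-(1/2):ℝ) := by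
      filter_upwards [ae_restrict_mem measurableSet_Ioc] with s hs
      exact Real.rpow_nonneg hs.1.le _
    rw [← ofReal_integral_eq_lintegral_ofReal hint hnn]
    congr 1
    rw [← intervalIntegral.integral_of_le h0.le, integral_rpow (Or.inl (by norm_num)),
      Real.zero_rpow (by norm_num)]
    rw [show (-(1/2) : ℝ) + 1 = 1/2 by norm_num]
    rw [sub_zero]
    rw [div_eq_mul_inv]
    norm_num
    ring
  have chain : ∫⁻ ω, ENNReal.ofReal (g ω) ∂μ
      ≤ ENNReal.ofReal (((Real.sqrt (2 * Real.pi))⁻¹ * 4 * M + 1) * h ^ ((9:ℝ)/4)) := by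
    calc ∫⁻ ω, ENNReal.ofReal (g ω) ∂μ
        ≤ ∫⁻ ω, ENNReal.ofReal h * ∫⁻ s, F ω s ∂ν ∂μ := lintegral_mono_ae step1
      _ = ENNReal.ofReal h * ∫⁻ ω, ∫⁻ s, F ω s ∂ν ∂μ :=
          lintegral_const_mul' _ _ ENNReal.ofReal_ne_top
      _ = ENNReal.ofReal h * ∫⁻ s, ∫⁻ ω, F ω s ∂μ ∂ν := by
          rw [lintegral_lintegral_swap hFae]
      _ ≤ ENNReal.ofReal h * ∫⁻ s in Set.Ioc (0:ℝ) h,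
            ENNReal.ofReal ((Real.sqrt (2 * Real.pi))⁻¹ * (2 * M * h) * s ^ (-(1/2):ℝ))
            ∂volume := by
          refine mul_le_mul_right (lintegral_mono_ae ?_) _
          filter_upwards [ae_restrict_mem measurableSet_Ioc] with s hs using perS s hs
      _ = ENNReal.ofReal h * (ENNReal.ofReal ((Real.sqrt (2 * Real.pi))⁻¹ * (2 * M * h))
            * ENNReal.ofReal (2 * h ^ ((1:ℝ)/2))) := by
          congr 1
          rw [← hK, ← lintegral_const_mul' _ _ ENNReal.ofReal_ne_top]
          exact lintegral_congr fun s => ENNReal.ofReal_mul hC0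
      _ ≤ ENNReal.ofReal (((Real.sqrt (2 * Real.pi))⁻¹ * 4 * M + 1) * h ^ ((9:ℝ)/4)) := by
          rw [← ENNReal.ofReal_mul hC0, ← ENNReal.ofReal_mul h0.le]
          apply ENNReal.ofReal_le_ofReal
          have e2 : h * h * h ^ ((1:ℝ)/2) = h ^ ((5:ℝ)/2) := by
            rw [show h * h * h ^ ((1:ℝ)/2) = h ^ ((1:ℝ)) * h ^ ((1:ℝ)) * h ^ ((1:ℝ)/2) by
              rw [Real.rpow_one], ← Real.rpow_add h0, ← Real.rpow_add h0]
            norm_num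
          have e3 : h ^ ((5:ℝ)/2) ≤ h ^ ((9:ℝ)/4) :=
            Real.rpow_le_rpow_of_exponent_ge h0 h1 (by norm_num)
          have e4 : (0:ℝ) ≤ h ^ ((9:ℝ)/4) := Real.rpow_nonneg h0.le _
          calc h * ((Real.sqrt (2 * Real.pi))⁻¹ * (2 * M * h) * (2 * h ^ ((1:ℝ)/2)))
              = ((Real.sqrt (2 * Real.pi))⁻¹ * 4 * M) * (h * h * h ^ ((1:ℝ)/2)) := by ring
            _ = ((Real.sqrt (2 * Real.pi))⁻¹ * 4 * M) * h ^ ((5:ℝ)/2) := by rw [e2]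
            _ ≤ ((Real.sqrt (2 * Real.pi))⁻¹ * 4 * M) * h ^ ((9:ℝ)/4) :=
                mul_le_mul_of_nonneg_left e3 hK0
            _ ≤ ((Real.sqrt (2 * Real.pi))⁻¹ * 4 * M + 1) * h ^ ((9:ℝ)/4) := by nlinarith
  have hnng : 0 ≤ᵐ[μ] g := Eventually.of_forall fun ω => by positivity
  rw [integral_eq_lintegral_of_nonneg_ae hnng hInt.1]
  have hfin := ENNReal.toReal_mono ENNReal.ofReal_ne_top chain
  have hcnn : (0:ℝ) ≤ ((Real.sqrt (2 * Real.pi))⁻¹ * 4 * M + 1) * h ^ ((9:ℝ)/4) := by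
    have e4 : (0:ℝ) ≤ h ^ ((9:ℝ)/4) := Real.rpow_nonneg h0.le _
    nlinarith
  rwa [ENNReal.toReal_ofReal hcnn] at hfin
end

section
/- Let $G, H : \mathbb{R} \to \mathbb{R}$ be bi-Lipschitz continuous functions whose derivatives $G', H'$ exist, are bounded, absolutely continuous, and bounded away from zero (in absolute value), with weak second derivatives $D^2 G$, $D^2 H$. Then $G^Z = G \circ H^{-1}$ is bi-Lipschitz continuous, its derivative $(G^Z)' = \frac{G'}{H'} \circ H^{-1}$ is absolutely continuous, and $D^2 G^Z = \frac{D^2 G \cdot H' - G' \cdot D^2 H}{(H')^3} \circ H^{-1}$ is a weak derivative of $(G^Z)'$. -/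
open MeasureTheory intervalIntegral Set Function

private lemma aux_chain (D K : ℝ → ℝ) (A B : ℝ) (hAB : A ≤ B)
    (h : ∀ ε > (0:ℝ), ∃ δ > (0:ℝ), ∀ a t, A ≤ a → a ≤ t → t ≤ B → t - a ≤ δ →
      |D t - D a| ≤ ε * (K t - K a)) : D B = D A := by
  have key : ∀ ε > (0:ℝ), |D B - D A| ≤ ε * (K B - K A) := by
    intro ε hε
    obtain ⟨δ, hδ, hb⟩ := h ε hε
    obtain ⟨n₀, hn₀⟩ := exists_nat_gt ((B - A) / δ)
    set n : ℕ := n₀ + 1 with hn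
    have hnpos : (0:ℝ) < n := by positivity
    set s : ℝ := (B - A) / n with hs
    have hs0 : 0 ≤ s := by
      apply div_nonneg (by linarith) hnpos.le
    have hsδ : s ≤ δ := by
      have h1 : (B - A) < n₀ * δ := (div_lt_iff₀ hδ).mp hn₀
      have h2 : (n₀:ℝ) ≤ n := by exact_mod_cast Nat.le_succ n₀
      rw [hs, div_le_iff₀ hnpos]
      nlinarith
    have hfn : A + n * s = B := by
      rw [hs]; field_simp; ring
    have teleD : ∑ i ∈ Finset.range n, (D (A + (i+1) * s) - D (A + i * s)) = D B - D A := by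
      have := Finset.sum_range_sub (fun i : ℕ => D (A + i * s)) n
      simpa [hfn] using this
    have teleK : ∑ i ∈ Finset.range n, (K (A + (i+1) * s) - K (A + i * s)) = K B - K A := by
      have := Finset.sum_range_sub (fun i : ℕ => K (A + i * s)) n
      simpa [hfn] using this
    have hstep : ∀ i ∈ Finset.range n,
        |D (A + ((i:ℝ)+1) * s) - D (A + (i:ℝ) * s)| ≤ ε * (K (A + ((i:ℝ)+1) * s) - K (A + (i:ℝ) * s)) := by
      intro i hi
      have hi' : (i:ℝ) + 1 ≤ n := by
        exact_mod_cast Nat.succ_le_of_lt (Finset.mem_range.mp hi)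
      have hmul := mul_le_mul_of_nonneg_right hi' hs0
      have hi0 : (0:ℝ) ≤ (i:ℝ) := Nat.cast_nonneg i
      have hinc : (i:ℝ) * s ≤ ((i:ℝ)+1) * s := by nlinarith
      apply hb
      · nlinarith
      · linarith
      · linarith [hfn]
      · have : A + ((i:ℝ)+1) * s - (A + (i:ℝ) * s) = s := by ring
        rw [this]; exact hsδ
    calc |D B - D A| = |∑ i ∈ Finset.range n, (D (A + ((i:ℝ)+1) * s) - D (A + (i:ℝ) * s))| := by
          rw [teleD]
      _ ≤ ∑ i ∈ Finset.range n, |D (A + ((i:ℝ)+1) * s) - D (A + (i:ℝ) * s)| :=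
          Finset.abs_sum_le_sum_abs _ _
      _ ≤ ∑ i ∈ Finset.range n, ε * (K (A + ((i:ℝ)+1) * s) - K (A + (i:ℝ) * s)) :=
          Finset.sum_le_sum hstep
      _ = ε * (K B - K A) := by rw [← Finset.mul_sum, teleK]
  have hK0 : 0 ≤ K B - K A := by
    have := key 1 one_pos
    have h0 : (0:ℝ) ≤ |D B - D A| := abs_nonneg _
    linarith
  have : ∀ ε > (0:ℝ), |D B - D A| ≤ ε := by
    intro ε hε
    have h1 : 0 < K B - K A + 1 := by linarith
    have := key (ε / (K B - K A + 1)) (by positivity)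
    calc |D B - D A| ≤ ε / (K B - K A + 1) * (K B - K A) := this
      _ ≤ ε / (K B - K A + 1) * (K B - K A + 1) := by
          apply mul_le_mul_of_nonneg_left (by linarith) (by positivity)
      _ = ε := by field_simp
  have habs : |D B - D A| ≤ 0 := le_of_forall_pos_le_add (by intro ε hε; simpa using this ε hε)
  have := abs_nonneg (D B - D A)
  have : |D B - D A| = 0 := le_antisymm habs this
  have := abs_eq_zero.mp this
  linarith [this]

private lemma aux_quot (G' H' D2G D2H : ℝ → ℝ) (lH : ℝ) (hlH : 0 < lH)
    (hH'bd : ∀ x, lH ≤ |H' x|)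
    (hG'ac : ∀ x : ℝ, G' x = G' 0 + ∫ z in (0:ℝ)..x, D2G z)
    (hH'ac : ∀ x : ℝ, H' x = H' 0 + ∫ z in (0:ℝ)..x, D2H z)
    (hD2G : MeasureTheory.LocallyIntegrable D2G)
    (hD2H : MeasureTheory.LocallyIntegrable D2H) (x : ℝ) :
    G' x / H' x = G' 0 / H' 0
      + ∫ s in (0:ℝ)..x, (D2G s * H' s - G' s * D2H s) / (H' s)^2 := by
  have iiG : ∀ a b : ℝ, IntervalIntegrable D2G volume a b := fun a b =>
    (hD2G.integrableOn_isCompact isCompact_uIcc).intervalIntegrable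
  have iiH : ∀ a b : ℝ, IntervalIntegrable D2H volume a b := fun a b =>
    (hD2H.integrableOn_isCompact isCompact_uIcc).intervalIntegrable
  have hH'c : Continuous H' := by
    have h : H' = fun y => H' 0 + ∫ z in (0:ℝ)..y, D2H z := funext hH'ac
    rw [h]
    exact continuous_const.add (intervalIntegral.continuous_primitive iiH 0)
  have hG'c : Continuous G' := by
    have h : G' = fun y => G' 0 + ∫ z in (0:ℝ)..y, D2G z := funext hG'ac
    rw [h]
    exact continuous_const.add (intervalIntegral.continuous_primitive iiG 0)
  have hne : ∀ s, H' s ≠ 0 := by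
    intro s h
    have := hH'bd s
    rw [h] at this; simp at this; linarith
  set j : ℝ → ℝ := fun s => (D2G s * H' s - G' s * D2H s) / (H' s)^2 with hj
  have hc1 : Continuous fun s => (H' s)⁻¹ := hH'c.inv₀ hne
  have hc2 : Continuous fun s => G' s / (H' s)^2 :=
    hG'c.div (hH'c.pow 2) fun s => pow_ne_zero 2 (hne s)
  have hjeq : ∀ s, j s = D2G s * (H' s)⁻¹ - D2H s * (G' s / (H' s)^2) := by
    intro s
    rw [hj]
    have := hne s
    field_simp
  have iif1 : ∀ a b : ℝ, IntervalIntegrable (fun s => D2G s * (H' s)⁻¹) volume a b :=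
    fun a b => (iiG a b).mul_continuousOn hc1.continuousOn
  have iif2 : ∀ a b : ℝ, IntervalIntegrable (fun s => D2H s * (G' s / (H' s)^2)) volume a b :=
    fun a b => (iiH a b).mul_continuousOn hc2.continuousOn
  have iij : ∀ a b : ℝ, IntervalIntegrable j volume a b := by
    intro a b
    rw [show j = fun s => D2G s * (H' s)⁻¹ - D2H s * (G' s / (H' s)^2) from funext hjeq]
    exact (iif1 a b).sub (iif2 a b)
  have hGdiff : ∀ a t : ℝ, G' t - G' a = ∫ s in a..t, D2G s := by
    intro a t
    have h := intervalIntegral.integral_interval_sub_left (iiG 0 t) (iiG 0 a)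
    rw [hG'ac t, hG'ac a]
    linarith
  have hHdiff : ∀ a t : ℝ, H' t - H' a = ∫ s in a..t, D2H s := by
    intro a t
    have h := intervalIntegral.integral_interval_sub_left (iiH 0 t) (iiH 0 a)
    rw [hH'ac t, hH'ac a]
    linarith
  have hjdiff : ∀ a t : ℝ, (∫ s in (0:ℝ)..t, j s) - ∫ s in (0:ℝ)..a, j s = ∫ s in a..t, j s :=
    fun a t => intervalIntegral.integral_interval_sub_left (iij 0 t) (iij 0 a)
  have hjsplit : ∀ a t : ℝ, (∫ s in a..t, j s) =
      (∫ s in a..t, D2G s * (H' s)⁻¹) - ∫ s in a..t, D2H s * (G' s / (H' s)^2) := by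
    intro a t
    rw [show (∫ s in a..t, j s)
        = ∫ s in a..t, (D2G s * (H' s)⁻¹ - D2H s * (G' s / (H' s)^2)) from
      intervalIntegral.integral_congr fun s _ => hjeq s]
    exact intervalIntegral.integral_sub (iif1 a t) (iif2 a t)
  have ident : ∀ a t : ℝ,
      (G' t / H' t - ∫ s in (0:ℝ)..t, j s) - (G' a / H' a - ∫ s in (0:ℝ)..a, j s)
      = ∫ s in a..t, (D2G s * ((H' t)⁻¹ - (H' s)⁻¹)
          + D2H s * (G' s / (H' s)^2 - G' a / (H' t * H' a))) := by
    intro a t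
    have I1 : IntervalIntegrable (fun s => D2G s * ((H' t)⁻¹ - (H' s)⁻¹)) volume a t :=
      (iiG a t).mul_continuousOn (continuousOn_const.sub hc1.continuousOn)
    have I2 : IntervalIntegrable
        (fun s => D2H s * (G' s / (H' s)^2 - G' a / (H' t * H' a))) volume a t :=
      (iiH a t).mul_continuousOn (hc2.continuousOn.sub continuousOn_const)
    rw [intervalIntegral.integral_add I1 I2]
    have E1 : (∫ s in a..t, D2G s * ((H' t)⁻¹ - (H' s)⁻¹))
        = (H' t)⁻¹ * (G' t - G' a) - ∫ s in a..t, D2G s * (H' s)⁻¹ := by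
      rw [show (fun s => D2G s * ((H' t)⁻¹ - (H' s)⁻¹))
          = fun s => D2G s * (H' t)⁻¹ - D2G s * (H' s)⁻¹ from by funext s; ring]
      rw [intervalIntegral.integral_sub ((iiG a t).mul_const _) (iif1 a t),
        intervalIntegral.integral_mul_const, hGdiff a t]
      ring
    have E2 : (∫ s in a..t, D2H s * (G' s / (H' s)^2 - G' a / (H' t * H' a)))
        = (∫ s in a..t, D2H s * (G' s / (H' s)^2)) - G' a / (H' t * H' a) * (H' t - H' a) := by
      rw [show (fun s => D2H s * (G' s / (H' s)^2 - G' a / (H' t * H' a)))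
          = fun s => D2H s * (G' s / (H' s)^2) - D2H s * (G' a / (H' t * H' a)) from by
        funext s; ring]
      rw [intervalIntegral.integral_sub (iif2 a t) ((iiH a t).mul_const _),
        intervalIntegral.integral_mul_const, hHdiff a t]
      ring
    rw [E1, E2]
    have hXY : (∫ s in (0:ℝ)..t, j s) - (∫ s in (0:ℝ)..a, j s)
        = (∫ s in a..t, D2G s * (H' s)⁻¹) - ∫ s in a..t, D2H s * (G' s / (H' s)^2) := by
      rw [hjdiff a t, hjsplit a t]
    have halg : G' t / H' t - G' a / H' a
        = (H' t)⁻¹ * (G' t - G' a) - G' a / (H' t * H' a) * (H' t - H' a) := by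
      have h1 := hne a; have h2 := hne t
      field_simp
      ring
    linarith
  -- the chaining argument
  have iiabs : ∀ a b : ℝ, IntervalIntegrable (fun s => |D2G s| + |D2H s|) volume a b :=
    fun a b => (iiG a b).abs.add (iiH a b).abs
  have hKdiff : ∀ a t : ℝ,
      (∫ s in (0:ℝ)..t, (|D2G s| + |D2H s|)) - (∫ s in (0:ℝ)..a, (|D2G s| + |D2H s|))
        = ∫ s in a..t, (|D2G s| + |D2H s|) :=
    fun a t => intervalIntegral.integral_interval_sub_left (iiabs 0 t) (iiabs 0 a)
  have main : ∀ A B : ℝ, A ≤ B →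
      (fun t => G' t / H' t - ∫ s in (0:ℝ)..t, j s) B
        = (fun t => G' t / H' t - ∫ s in (0:ℝ)..t, j s) A := by
    intro A B hAB
    apply aux_chain _ (fun t => ∫ s in (0:ℝ)..t, (|D2G s| + |D2H s|)) A B hAB
    intro ε hε
    set F : ℝ × ℝ × ℝ → ℝ := fun p => |(H' p.2.2)⁻¹ - (H' p.2.1)⁻¹|
        + |G' p.2.1 / (H' p.2.1)^2 - G' p.1 / (H' p.2.2 * H' p.1)| with hF
    have hFc : Continuous F := by
      apply Continuous.add
      · apply Continuous.abs
        exact ((hH'c.comp (continuous_snd.comp continuous_snd)).inv₀ fun p => hne _).sub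
          ((hH'c.comp (continuous_fst.comp continuous_snd)).inv₀ fun p => hne _)
      · apply Continuous.abs
        apply Continuous.sub
        · exact (hG'c.comp (continuous_fst.comp continuous_snd)).div
            ((hH'c.comp (continuous_fst.comp continuous_snd)).pow 2)
            fun p => pow_ne_zero _ (hne _)
        · exact (hG'c.comp continuous_fst).div
            ((hH'c.comp (continuous_snd.comp continuous_snd)).mul (hH'c.comp continuous_fst))
            fun p => mul_ne_zero (hne _) (hne _)
    have hQ : IsCompact ((Set.Icc A B) ×ˢ (Set.Icc A B) ×ˢ (Set.Icc A B)) :=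
      isCompact_Icc.prod (isCompact_Icc.prod isCompact_Icc)
    have hUC := hQ.uniformContinuousOn_of_continuous hFc.continuousOn
    rw [Metric.uniformContinuousOn_iff] at hUC
    obtain ⟨δ, hδ, hδ'⟩ := hUC ε hε
    refine ⟨δ/2, by positivity, ?_⟩
    intro a t hAa hat htB hta
    have hFb : ∀ s, a ≤ s → s ≤ t → F (a, s, t) < ε := by
      intro s has hst
      have hmem1 : (a, s, t) ∈ (Set.Icc A B) ×ˢ (Set.Icc A B) ×ˢ (Set.Icc A B) := by
        refine ⟨⟨hAa, by linarith⟩, ⟨⟨by linarith, by linarith⟩, ⟨by linarith, htB⟩⟩⟩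
      have hmem2 : (a, a, a) ∈ (Set.Icc A B) ×ˢ (Set.Icc A B) ×ˢ (Set.Icc A B) :=
        ⟨⟨hAa, by linarith⟩, ⟨⟨hAa, by linarith⟩, ⟨hAa, by linarith⟩⟩⟩
      have hdist : dist ((a, s, t) : ℝ × ℝ × ℝ) (a, a, a) < δ := by
        rw [Prod.dist_eq, Prod.dist_eq]
        simp only [Real.dist_eq]
        have h1 : |a - a| = 0 := by simp
        have h2 : |s - a| ≤ δ/2 := by rw [abs_of_nonneg (by linarith)]; linarith
        have h3 : |t - a| ≤ δ/2 := by rw [abs_of_nonneg (by linarith)]; linarith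
        calc max |a - a| (max |s - a| |t - a|) ≤ max 0 (max (δ/2) (δ/2)) := by
              apply max_le_max (le_of_eq h1) (max_le_max h2 h3)
          _ = δ/2 := by simp [le_max_iff]; linarith
          _ < δ := by linarith
      have hd := hδ' _ hmem1 _ hmem2 hdist
      have hF0 : F (a, a, a) = 0 := by
        simp [hF, pow_two]
      rw [hF0, dist_zero_right] at hd
      calc F (a, s, t) ≤ |F (a, s, t)| := le_abs_self _
        _ < ε := by simpa [Real.norm_eq_abs] using hd
    have I1 : IntervalIntegrable (fun s => D2G s * ((H' t)⁻¹ - (H' s)⁻¹)) volume a t :=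
      (iiG a t).mul_continuousOn (continuousOn_const.sub hc1.continuousOn)
    have I2 : IntervalIntegrable
        (fun s => D2H s * (G' s / (H' s)^2 - G' a / (H' t * H' a))) volume a t :=
      (iiH a t).mul_continuousOn (hc2.continuousOn.sub continuousOn_const)
    show |(G' t / H' t - ∫ s in (0:ℝ)..t, j s) - (G' a / H' a - ∫ s in (0:ℝ)..a, j s)|
      ≤ ε * ((∫ s in (0:ℝ)..t, (|D2G s| + |D2H s|)) - ∫ s in (0:ℝ)..a, (|D2G s| + |D2H s|))
    rw [ident a t]
    calc |∫ s in a..t, (D2G s * ((H' t)⁻¹ - (H' s)⁻¹)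
          + D2H s * (G' s / (H' s)^2 - G' a / (H' t * H' a)))|
        ≤ ∫ s in a..t, |D2G s * ((H' t)⁻¹ - (H' s)⁻¹)
          + D2H s * (G' s / (H' s)^2 - G' a / (H' t * H' a))| :=
          intervalIntegral.abs_integral_le_integral_abs hat
      _ ≤ ∫ s in a..t, ε * (|D2G s| + |D2H s|) := by
          apply intervalIntegral.integral_mono_on hat (I1.add I2).abs
            ((iiabs a t).const_mul ε)
          intro s hs
          have hF := hFb s hs.1 hs.2
          have hu : |(H' t)⁻¹ - (H' s)⁻¹| ≤ ε :=
            le_of_lt (lt_of_le_of_lt (le_add_of_nonneg_right (abs_nonneg _)) hF)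
          have hv : |G' s / (H' s)^2 - G' a / (H' t * H' a)| ≤ ε :=
            le_of_lt (lt_of_le_of_lt (le_add_of_nonneg_left (abs_nonneg _)) hF)
          calc |D2G s * ((H' t)⁻¹ - (H' s)⁻¹)
              + D2H s * (G' s / (H' s)^2 - G' a / (H' t * H' a))|
              ≤ |D2G s * ((H' t)⁻¹ - (H' s)⁻¹)|
                + |D2H s * (G' s / (H' s)^2 - G' a / (H' t * H' a))| := abs_add_le _ _
            _ = |D2G s| * |(H' t)⁻¹ - (H' s)⁻¹|
                + |D2H s| * |G' s / (H' s)^2 - G' a / (H' t * H' a)| := by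
                rw [abs_mul, abs_mul]
            _ ≤ |D2G s| * ε + |D2H s| * ε := by
                gcongr <;> assumption
            _ = ε * (|D2G s| + |D2H s|) := by ring
      _ = ε * ∫ s in a..t, (|D2G s| + |D2H s|) := intervalIntegral.integral_const_mul _ _
      _ = ε * ((∫ s in (0:ℝ)..t, (|D2G s| + |D2H s|))
            - ∫ s in (0:ℝ)..a, (|D2G s| + |D2H s|)) := by rw [hKdiff a t]
  show G' x / H' x = G' 0 / H' 0 + ∫ s in (0:ℝ)..x, j s
  rcases le_total 0 x with hx | hx
  · have h := main 0 x hx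
    simp only [intervalIntegral.integral_same] at h
    have : G' x / H' x - ∫ s in (0:ℝ)..x, j s = G' 0 / H' 0 - 0 := h
    linarith
  · have h := main x 0 hx
    simp only [intervalIntegral.integral_same] at h
    have : G' 0 / H' 0 - 0 = G' x / H' x - ∫ s in (0:ℝ)..x, j s := h
    linarith

theorem stmt_19 (G H G' H' D2G D2H : ℝ → ℝ)
    (LG lG LH lH : ℝ) (hlG : 0 < lG) (hlH : 0 < lH)
    -- G and H are bi-Lipschitz
    (hGbi : ∀ x y : ℝ, lG * |x - y| ≤ |G x - G y| ∧ |G x - G y| ≤ LG * |x - y|)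
    (hHbi : ∀ x y : ℝ, lH * |x - y| ≤ |H x - H y| ∧ |H x - H y| ≤ LH * |x - y|)
    -- G' and H' are the (everywhere existing) derivatives of G and H
    (hG' : ∀ x, HasDerivAt G (G' x) x) (hH' : ∀ x, HasDerivAt H (H' x) x)
    -- the derivatives are bounded and bounded away from zero
    (hG'bd : ∀ x, lG ≤ |G' x| ∧ |G' x| ≤ LG) (hH'bd : ∀ x, lH ≤ |H' x| ∧ |H' x| ≤ LH)
    -- G' and H' are absolutely continuous with weak derivatives D2G and D2H
    (hG'ac : ∀ x : ℝ, G' x = G' 0 + ∫ z in (0 : ℝ)..x, D2G z)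
    (hH'ac : ∀ x : ℝ, H' x = H' 0 + ∫ z in (0 : ℝ)..x, D2H z)
    (hD2G : MeasureTheory.LocallyIntegrable D2G)
    (hD2H : MeasureTheory.LocallyIntegrable D2H) :
    -- G ∘ H⁻¹ is bi-Lipschitz,
    (∃ l L : ℝ, 0 < l ∧ l ≤ L ∧ ∀ x y : ℝ,
      l * |x - y| ≤ |G (Function.invFun H x) - G (Function.invFun H y)| ∧
      |G (Function.invFun H x) - G (Function.invFun H y)| ≤ L * |x - y|) ∧
    -- its derivative is (G'/H') ∘ H⁻¹,
    (∀ x : ℝ, HasDerivAt (fun y => G (Function.invFun H y))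
      (G' (Function.invFun H x) / H' (Function.invFun H x)) x) ∧
    -- and this derivative is absolutely continuous with the claimed weak derivative
    (∀ x : ℝ, G' (Function.invFun H x) / H' (Function.invFun H x)
      = G' (Function.invFun H 0) / H' (Function.invFun H 0)
        + ∫ z in (0 : ℝ)..x,
            (D2G (Function.invFun H z) * H' (Function.invFun H z)
              - G' (Function.invFun H z) * D2H (Function.invFun H z))
            / (H' (Function.invFun H z)) ^ 3) := by
  have hHcont : Continuous H := by
    rw [continuous_iff_continuousAt]; exact fun x => (hH' x).continuousAt
  have hHinj : Function.Injective H := by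
    intro u v huv
    have h := (hHbi u v).1
    rw [huv] at h
    simp only [sub_self, abs_zero] at h
    have : |u - v| ≤ 0 := by nlinarith [abs_nonneg (u - v)]
    have := abs_nonneg (u - v)
    have : |u - v| = 0 := le_antisymm ‹_› ‹_›
    have := abs_eq_zero.mp this
    linarith [this]
  -- interval integrability and continuity of derivatives
  have iiG : ∀ a b : ℝ, IntervalIntegrable D2G volume a b := fun a b =>
    (hD2G.integrableOn_isCompact isCompact_uIcc).intervalIntegrable
  have iiH : ∀ a b : ℝ, IntervalIntegrable D2H volume a b := fun a b =>
    (hD2H.integrableOn_isCompact isCompact_uIcc).intervalIntegrable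
  have hH'c : Continuous H' := by
    have h : H' = fun y => H' 0 + ∫ z in (0:ℝ)..y, D2H z := funext hH'ac
    rw [h]
    exact continuous_const.add (intervalIntegral.continuous_primitive iiH 0)
  have hG'c : Continuous G' := by
    have h : G' = fun y => G' 0 + ∫ z in (0:ℝ)..y, D2G z := funext hG'ac
    rw [h]
    exact continuous_const.add (intervalIntegral.continuous_primitive iiG 0)
  have hne : ∀ s, H' s ≠ 0 := by
    intro s h
    have := (hH'bd s).1
    rw [h] at this; simp at this; linarith
  have hGne : ∀ s, G' s ≠ 0 := by
    intro s h
    have := (hG'bd s).1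
    rw [h] at this; simp at this; linarith
  -- sign dichotomy for H'
  have hsign : (∀ s, 0 < H' s) ∨ (∀ s, H' s < 0) := by
    rcases (hne 0).lt_or_gt with h0 | h0
    · right
      intro s
      by_contra hs
      push_neg at hs
      have hs' : 0 < H' s := lt_of_le_of_ne hs (Ne.symm (hne s))
      have h00 : (0:ℝ) ∈ uIcc (H' 0) (H' s) := by
        rw [Set.mem_uIcc]; left; exact ⟨h0.le, hs'.le⟩
      obtain ⟨c, _, hc⟩ := intermediate_value_uIcc hH'c.continuousOn h00
      exact hne c hc
    · left
      intro s
      by_contra hs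
      push_neg at hs
      have hs' : H' s < 0 := lt_of_le_of_ne hs (hne s)
      have h00 : (0:ℝ) ∈ uIcc (H' s) (H' 0) := by
        rw [Set.mem_uIcc]; left; exact ⟨hs'.le, h0.le⟩
      obtain ⟨c, _, hc⟩ := intermediate_value_uIcc hH'c.continuousOn h00
      exact hne c hc
  -- surjectivity
  have hHsurj : Function.Surjective H := by
    intro y
    set R : ℝ := |y - H 0| / lH with hR
    have hR0 : 0 ≤ R := by positivity
    rcases hsign with hpos | hneg
    · have hmono : StrictMono H := strictMono_of_hasDerivAt_pos hH' hpos
      have h1 : H 0 ≤ H R := hmono.le_iff_le.mpr hR0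
      have h2 : H (-R) ≤ H 0 := hmono.le_iff_le.mpr (by linarith)
      have e1 : lH * R ≤ H R - H 0 := by
        have := (hHbi R 0).1
        rw [abs_of_nonneg (by linarith : H R - H 0 ≥ 0)] at this
        simpa [abs_of_nonneg hR0] using this
      have e2 : lH * R ≤ H 0 - H (-R) := by
        have := (hHbi (-R) 0).1
        rw [abs_of_nonpos (by linarith : H (-R) - H 0 ≤ 0)] at this
        have habs : |(-R) - 0| = R := by rw [abs_of_nonpos (by linarith)]; ring
        rw [habs] at this
        linarith
      have hyR : lH * R = |y - H 0| := by rw [hR]; field_simp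
      have hub : y ≤ H R := by
        have : y - H 0 ≤ |y - H 0| := le_abs_self _
        linarith
      have hlb : H (-R) ≤ y := by
        have : -(y - H 0) ≤ |y - H 0| := neg_le_abs _
        linarith
      obtain ⟨u, _, hu⟩ := intermediate_value_Icc (by linarith : -R ≤ R)
        hHcont.continuousOn ⟨hlb, hub⟩
      exact ⟨u, hu⟩
    · have hanti : StrictAnti H := strictAnti_of_hasDerivAt_neg hH' hneg
      have h1 : H R ≤ H 0 := hanti.le_iff_ge.mpr hR0
      have h2 : H 0 ≤ H (-R) := hanti.le_iff_ge.mpr (by linarith)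
      have e1 : lH * R ≤ H 0 - H R := by
        have := (hHbi R 0).1
        rw [abs_of_nonpos (by linarith : H R - H 0 ≤ 0)] at this
        rw [show |R - (0:ℝ)| = R from by rw [sub_zero, abs_of_nonneg hR0]] at this
        linarith
      have e2 : lH * R ≤ H (-R) - H 0 := by
        have := (hHbi (-R) 0).1
        rw [abs_of_nonneg (by linarith : H (-R) - H 0 ≥ 0)] at this
        have habs : |(-R) - 0| = R := by rw [abs_of_nonpos (by linarith)]; ring
        rw [habs] at this
        linarith
      have hyR : lH * R = |y - H 0| := by rw [hR]; field_simp
      have hub : y ≤ H (-R) := by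
        have : y - H 0 ≤ |y - H 0| := le_abs_self _
        linarith
      have hlb : H R ≤ y := by
        have : -(y - H 0) ≤ |y - H 0| := neg_le_abs _
        linarith
      obtain ⟨u, _, hu⟩ := intermediate_value_Icc' (by linarith : -R ≤ R)
        hHcont.continuousOn ⟨hlb, hub⟩
      exact ⟨u, hu⟩
  set r : ℝ → ℝ := Function.invFun H with hr
  have hri : ∀ y, H (r y) = y := fun y => Function.rightInverse_invFun hHsurj y
  have hli : ∀ u, r (H u) = u := fun u => Function.leftInverse_invFun hHinj u
  have hrlip : ∀ y z, lH * |r y - r z| ≤ |y - z| := by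
    intro y z
    have := (hHbi (r y) (r z)).1
    rwa [hri, hri] at this
  have hrlow : ∀ y z, |y - z| ≤ LH * |r y - r z| := by
    intro y z
    have := (hHbi (r y) (r z)).2
    rwa [hri, hri] at this
  have hLH0 : 0 < LH := lt_of_lt_of_le hlH (le_trans (hH'bd 0).1 (hH'bd 0).2)
  have hLG0 : 0 < LG := lt_of_lt_of_le hlG (le_trans (hG'bd 0).1 (hG'bd 0).2)
  have hlHLH : lH ≤ LH := le_trans (hH'bd 0).1 (hH'bd 0).2
  have hlGLG : lG ≤ LG := le_trans (hG'bd 0).1 (hG'bd 0).2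
  refine ⟨⟨lG / LH, LG / lH, div_pos hlG hLH0, ?_, ?_⟩, ?_, ?_⟩
  · rw [div_le_div_iff₀ hLH0 hlH]
    nlinarith
  · intro x y
    constructor
    · calc lG / LH * |x - y| ≤ lG / LH * (LH * |r x - r y|) := by
            apply mul_le_mul_of_nonneg_left (hrlow x y) (by positivity)
        _ = lG * |r x - r y| := by field_simp
        _ ≤ |G (r x) - G (r y)| := (hGbi _ _).1
    · calc |G (r x) - G (r y)| ≤ LG * |r x - r y| := (hGbi _ _).2
        _ = LG / lH * (lH * |r x - r y|) := by field_simp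
        _ ≤ LG / lH * |x - y| := by
            apply mul_le_mul_of_nonneg_left (hrlip x y) (by positivity)
  · -- derivative
    intro x
    have hrcont : Continuous r := by
      apply LipschitzWith.continuous (K := ⟨lH⁻¹, by positivity⟩)
      apply LipschitzWith.of_dist_le_mul
      intro y z
      rw [Real.dist_eq, Real.dist_eq]
      show |r y - r z| ≤ lH⁻¹ * |y - z|
      calc |r y - r z| = lH⁻¹ * (lH * |r y - r z|) := by field_simp
        _ ≤ lH⁻¹ * |y - z| := by
            apply mul_le_mul_of_nonneg_left (hrlip y z) (by positivity)
    have hdr : HasDerivAt r (H' (r x))⁻¹ x :=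
      HasDerivAt.of_local_left_inverse hrcont.continuousAt (hH' (r x)) (hne _)
        (Filter.Eventually.of_forall hri)
    have h := (hG' (r x)).comp x hdr
    rw [div_eq_mul_inv]
    exact h
  · -- absolute continuity of the derivative
    intro x
    have Qlem := aux_quot G' H' D2G D2H lH hlH (fun u => (hH'bd u).1) hG'ac hH'ac hD2G hD2H
    have hc1 : Continuous fun s => (H' s)⁻¹ := hH'c.inv₀ hne
    have hc2 : Continuous fun s => G' s / (H' s)^2 :=
      hG'c.div (hH'c.pow 2) fun s => pow_ne_zero 2 (hne s)
    set j : ℝ → ℝ := fun s => (D2G s * H' s - G' s * D2H s) / (H' s)^2 with hj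
    have hjeq : ∀ s, j s = D2G s * (H' s)⁻¹ - D2H s * (G' s / (H' s)^2) := by
      intro s
      rw [hj]
      have := hne s
      field_simp
    have iij : ∀ c d : ℝ, IntervalIntegrable j volume c d := by
      intro c d
      rw [show j = fun s => D2G s * (H' s)⁻¹ - D2H s * (G' s / (H' s)^2) from funext hjeq]
      exact ((iiG c d).mul_continuousOn hc1.continuousOn).sub
        ((iiH c d).mul_continuousOn hc2.continuousOn)
    set a : ℝ := r 0 with ha
    set b : ℝ := r x with hb
    have qdiff : G' b / H' b - G' a / H' a = ∫ s in a..b, j s := by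
      have h := intervalIntegral.integral_interval_sub_left (iij 0 b) (iij 0 a)
      rw [Qlem b, Qlem a]
      linarith
    have chg := MeasureTheory.integral_image_eq_integral_abs_deriv_smul
      (measurableSet_uIcc (a := a) (b := b))
      (fun u _ => (hH' u).hasDerivWithinAt) (hHinj.injOn)
      (fun z => (D2G (r z) * H' (r z) - G' (r z) * D2H (r z)) / (H' (r z))^3)
    have horient : ∀ (f : ℝ → ℝ) (c d : ℝ), c ≤ d →
        ∫ s in c..d, f s = ∫ s in uIcc c d, f s := by
      intro f c d hcd
      rw [intervalIntegral.integral_of_le hcd, uIcc_of_le hcd, integral_Icc_eq_integral_Ioc]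
    have cov : (∫ z in (0:ℝ)..x,
          (D2G (r z) * H' (r z) - G' (r z) * D2H (r z)) / (H' (r z))^3)
        = ∫ s in a..b, j s := by
      rcases hsign with hpos | hneg
      · have hmono : StrictMono H := strictMono_of_hasDerivAt_pos hH' hpos
        have himg : H '' uIcc a b = uIcc (0:ℝ) x := by
          apply Subset.antisymm
          · rintro z ⟨u, hu, rfl⟩
            rcases Set.mem_uIcc.mp hu with ⟨h1, h2⟩ | ⟨h1, h2⟩
            · refine Set.mem_uIcc.mpr (Or.inl ⟨?_, ?_⟩)
              · rw [← hri 0]; exact hmono.le_iff_le.mpr h1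
              · rw [← hri x]; exact hmono.le_iff_le.mpr h2
            · refine Set.mem_uIcc.mpr (Or.inr ⟨?_, ?_⟩)
              · rw [← hri x]; exact hmono.le_iff_le.mpr h1
              · rw [← hri 0]; exact hmono.le_iff_le.mpr h2
          · have h := intermediate_value_uIcc (f := H) (a := a) (b := b) hHcont.continuousOn
            rwa [hri 0, hri x] at h
        rw [himg] at chg
        have hRHS : (∫ u in uIcc a b, |H' u| •
            ((fun z => (D2G (r z) * H' (r z) - G' (r z) * D2H (r z)) / (H' (r z))^3) (H u)))
            = ∫ u in uIcc a b, j u := by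
          apply MeasureTheory.setIntegral_congr_fun measurableSet_uIcc
          intro u _
          simp only [smul_eq_mul, hli u]
          rw [abs_of_pos (hpos u), hj]
          have := hne u
          field_simp
        rw [hRHS] at chg
        rcases le_total 0 x with hx | hx
        · have hab : a ≤ b := by
            have h2 := hmono.le_iff_le (a := a) (b := b)
            rw [hri 0, hri x] at h2
            exact h2.mp hx
          rw [horient _ 0 x hx, horient j a b hab]
          exact chg
        · have hab : b ≤ a := by
            have h2 := hmono.le_iff_le (a := b) (b := a)
            rw [hri 0, hri x] at h2
            exact h2.mp hx
          rw [intervalIntegral.integral_symm, horient _ x 0 hx, uIcc_comm x 0,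
            intervalIntegral.integral_symm, horient j b a hab, uIcc_comm b a]
          rw [chg]
      · have hanti : StrictAnti H := strictAnti_of_hasDerivAt_neg hH' hneg
        have himg : H '' uIcc a b = uIcc (0:ℝ) x := by
          apply Subset.antisymm
          · rintro z ⟨u, hu, rfl⟩
            rcases Set.mem_uIcc.mp hu with ⟨h1, h2⟩ | ⟨h1, h2⟩
            · refine Set.mem_uIcc.mpr (Or.inr ⟨?_, ?_⟩)
              · rw [← hri x]; exact hanti.le_iff_ge.mpr h2
              · rw [← hri 0]; exact hanti.le_iff_ge.mpr h1
            · refine Set.mem_uIcc.mpr (Or.inl ⟨?_, ?_⟩)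
              · rw [← hri 0]; exact hanti.le_iff_ge.mpr h2
              · rw [← hri x]; exact hanti.le_iff_ge.mpr h1
          · have h := intermediate_value_uIcc (f := H) (a := a) (b := b) hHcont.continuousOn
            rwa [hri 0, hri x] at h
        rw [himg] at chg
        have hRHS : (∫ u in uIcc a b, |H' u| •
            ((fun z => (D2G (r z) * H' (r z) - G' (r z) * D2H (r z)) / (H' (r z))^3) (H u)))
            = ∫ u in uIcc a b, (-(j u)) := by
          apply MeasureTheory.setIntegral_congr_fun measurableSet_uIcc
          intro u _
          simp only [smul_eq_mul, hli u]
          rw [abs_of_neg (hneg u), hj]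
          have := hne u
          field_simp
        rw [hRHS, MeasureTheory.integral_neg] at chg
        rcases le_total 0 x with hx | hx
        · have hab : b ≤ a := by
            have h2 := hanti.le_iff_ge (a := a) (b := b)
            rw [hri 0, hri x] at h2
            exact h2.mp hx
          rw [horient _ 0 x hx, intervalIntegral.integral_symm, horient j b a hab,
            uIcc_comm b a]
          rw [chg]
        · have hab : a ≤ b := by
            have h2 := hanti.le_iff_ge (a := b) (b := a)
            rw [hri 0, hri x] at h2
            exact h2.mp hx
          rw [intervalIntegral.integral_symm, horient _ x 0 hx, uIcc_comm x 0,
            horient j a b hab]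
          rw [chg]
          ring
    linarith [qdiff, cov]
end
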